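/- arXiv:2201.13415 — 3 statements merged into one kernel-verified Lean document; each statement's English description precedes it below -/
import Mathlib

section
/- Let G^n, …, G^{N−1} be maps with G^k : R^{d_{k+1}} → R^{d_k} differentiable at the points s^{k+1}, and define targets recursively by t^N_β = s^N − β·g and t^k_β = s^k + G^k(t^{k+1}_β) − G^k(s^{k+1}). Then for each k, lim_{β→0} (t^k_β − s^k)/β = −(∏_{j=k}^{N−1} J_{G^j}) · g, where J_{G^j} is the Jacobian of G^j at s^{j+1} and the product is applied in order J_{G^k}·J_{G^{k+1}}·…·J_{G^{N−1}}. -/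
open Matrix Filter

/-!
Each target is a differentiable function of `β`: `t^N_β = s^N − β g` is affine, and the
recursion composes `t^{k+1}` with `G^k`, which is differentiable at `t^{k+1}_0 = s^{k+1}`.
By the chain rule, `t^k` has derivative `J_{G^k}` applied to that of `t^{k+1}` at `β = 0`,
so by backward induction `t^k` has derivative `−(J_{G^k} ⋯ J_{G^{N−1}}) g` there and
`t^k_0 = s^k`, and `(t^k_β − s^k)/β` is the right difference quotient of `t^k` at `0`.
-/

theorem HasFDerivAt.hasDerivAt_add_comp_sub {𝕜 E F : Type*} [NontriviallyNormedField 𝕜]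
    [NormedAddCommGroup E] [NormedSpace 𝕜 E] [NormedAddCommGroup F] [NormedSpace 𝕜 F]
    {G : E → F} {L : E →L[𝕜] F} {u : 𝕜 → E} {u' : E} {x : 𝕜} (c : F)
    (hG : HasFDerivAt G L (u x)) (hu : HasDerivAt u u' x) :
    HasDerivAt (fun β => c + G (u β) - G (u x)) (L u') x := by
  simpa using ((hG.comp_hasDerivAt x hu).const_add c).sub_const (G (u x))

/-- Difference target propagation recursion: with feedback maps `G^k` differentiable
at `s^{k+1}` with Jacobians `J_{G^k}`, and targets `t^N_β = s^N − β·g`,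
`t^k_β = s^k + G^k(t^{k+1}_β) − G^k(s^{k+1})`, for each `k ≤ N` we have
`lim_{β→0⁺} (t^k_β − s^k)/β = −(J_{G^k}·…·J_{G^{N−1}})·g`, where `P k` denotes
the ordered Jacobian product (`P N = 1`, `P k = J_{G^k}·P (k+1)`). -/
theorem dtp_recursion_linearization (N : ℕ) (d : ℕ → ℕ)
    (G : ∀ k : ℕ, (Fin (d (k + 1)) → ℝ) → (Fin (d k) → ℝ))
    (s : ∀ k : ℕ, Fin (d k) → ℝ) (g : Fin (d N) → ℝ)
    (JG : ∀ k : ℕ, Matrix (Fin (d k)) (Fin (d (k + 1))) ℝ)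
    (hG : ∀ k, k < N →
      HasFDerivAt (G k) (LinearMap.toContinuousLinearMap (JG k).mulVecLin) (s (k + 1)))
    (t : ∀ k : ℕ, ℝ → (Fin (d k) → ℝ))
    (htN : ∀ β : ℝ, t N β = s N - β • g)
    (htrec : ∀ k, k < N → ∀ β : ℝ, t k β = s k + G k (t (k + 1) β) - G k (s (k + 1)))
    (P : ∀ k : ℕ, Matrix (Fin (d k)) (Fin (d N)) ℝ)
    (hPN : P N = 1)
    (hPrec : ∀ k, k < N → P k = JG k * P (k + 1)) :
    ∀ k, k ≤ N →
      Tendsto (fun β : ℝ => β⁻¹ • (t k β - s k))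
        (nhdsWithin 0 (Set.Ioi 0)) (nhds (-(P k *ᵥ g))) := by
  have hderiv : ∀ k, k ≤ N → t k 0 = s k ∧ HasDerivAt (t k) (-(P k *ᵥ g)) 0 := by
    intro k hk
    induction hk using Nat.decreasingInduction with
    | self =>
      have hN : t N = fun β => s N - β • g := funext htN
      refine ⟨by simp [hN], ?_⟩
      simpa [hN, hPN] using ((hasDerivAt_id (0 : ℝ)).smul_const g).const_sub (s N)
    | of_succ k hkN ih =>
      obtain ⟨h0, hd⟩ := ih
      have hk : t k = fun β => s k + G k (t (k + 1) β) - G k (t (k + 1) 0) := by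
        funext β
        rw [htrec k hkN, h0]
      refine ⟨by simp [hk], ?_⟩
      have hstep := (h0 ▸ hG k hkN).hasDerivAt_add_comp_sub (s k) hd
      simpa [hk, hPrec k hkN, Matrix.mulVec_neg, Matrix.mulVec_mulVec] using hstep
  intro k hk
  obtain ⟨h0, hd⟩ := hderiv k hk
  simpa [h0] using hd.tendsto_slope_zero_right
end

section
/- In the setting of the previous recursion, if additionally each Jacobian satisfies the Jacobian Matching Condition J_{G^k} = (J_{F^k})ᵀ where J_{F^k} is the Jacobian of the forward map F^k at s^k, then lim_{β→0} (t^k_β − s^k)/β = −(J_{F^k})ᵀ·(J_{F^{k+1}})ᵀ·…·(J_{F^{N−1}})ᵀ·g, which equals the backpropagated error −(∂s^N/∂s^k)ᵀ·g. -/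
open Matrix Filter

/-- DTP recursion under the Jacobian Matching Condition: with forward maps `F^k`
(`s^{k+1} = F^k(s^k)`, Jacobians `J_{F^k}`), feedback maps `G^k` (Jacobians `J_{G^k}`),
JMC `J_{G^k} = (J_{F^k})ᵀ`, and DTP targets `t^N_β = s^N − β·g`,
`t^k_β = s^k + G^k(t^{k+1}_β) − G^k(s^{k+1})`, we get
`lim_{β→0⁺} (t^k_β − s^k)/β = −(J_{F^k})ᵀ·…·(J_{F^{N−1}})ᵀ·g = −(∂s^N/∂s^k)ᵀ·g`,
where `B k = J_{F^{N−1}}·…·J_{F^k}` (`B N = 1`, `B k = B (k+1)·J_{F^k}`). -/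
theorem dtp_recursion_backprop_of_jmc (N : ℕ) (d : ℕ → ℕ)
    (F : ∀ k : ℕ, (Fin (d k) → ℝ) → (Fin (d (k + 1)) → ℝ))
    (G : ∀ k : ℕ, (Fin (d (k + 1)) → ℝ) → (Fin (d k) → ℝ))
    (s : ∀ k : ℕ, Fin (d k) → ℝ) (g : Fin (d N) → ℝ)
    (hs : ∀ k, k < N → s (k + 1) = F k (s k))
    (JF : ∀ k : ℕ, Matrix (Fin (d (k + 1))) (Fin (d k)) ℝ)
    (JG : ∀ k : ℕ, Matrix (Fin (d k)) (Fin (d (k + 1))) ℝ)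
    (hF : ∀ k, k < N →
      HasFDerivAt (F k) (LinearMap.toContinuousLinearMap (JF k).mulVecLin) (s k))
    (hG : ∀ k, k < N →
      HasFDerivAt (G k) (LinearMap.toContinuousLinearMap (JG k).mulVecLin) (s (k + 1)))
    (hJMC : ∀ k, k < N → JG k = (JF k)ᵀ)
    (t : ∀ k : ℕ, ℝ → (Fin (d k) → ℝ))
    (htN : ∀ β : ℝ, t N β = s N - β • g)
    (htrec : ∀ k, k < N → ∀ β : ℝ, t k β = s k + G k (t (k + 1) β) - G k (s (k + 1)))
    (B : ∀ k : ℕ, Matrix (Fin (d N)) (Fin (d k)) ℝ)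
    (hBN : B N = 1)
    (hBrec : ∀ k, k < N → B k = B (k + 1) * JF k) :
    ∀ k, k ≤ N →
      Tendsto (fun β : ℝ => β⁻¹ • (t k β - s k))
        (nhdsWithin 0 (Set.Ioi 0)) (nhds (-((B k)ᵀ *ᵥ g))) := by
  have key : ∀ j k, k ≤ N → N - k = j →
      t k 0 = s k ∧
        HasDerivWithinAt (t k) (-((B k)ᵀ *ᵥ g)) (Set.Ioi 0) 0 := by
    intro j
    induction j with
    | zero =>
      intro k hk hj
      have hkN : k = N := le_antisymm hk (Nat.sub_eq_zero_iff_le.mp hj)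
      subst hkN
      have ht : t k = fun β : ℝ => s k - β • g := funext htN
      constructor
      · rw [ht]; simp
      · rw [ht]
        have h1 : HasDerivAt (fun β : ℝ => s k - β • g) (-g) 0 := by
          simpa using ((hasDerivAt_id (0:ℝ)).smul_const g).const_sub (s k)
        have : -((B k)ᵀ *ᵥ g) = -g := by rw [hBN]; simp
        rw [this]
        exact h1.hasDerivWithinAt
    | succ j ih =>
      intro k hk hj
      have hkN : k < N := by omega
      obtain ⟨h0, hd⟩ := ih (k + 1) (by omega) (by omega)
      have ht : t k = fun β : ℝ => s k + G k (t (k + 1) β) - G k (s (k + 1)) :=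
        funext (htrec k hkN)
      have h00 : t k 0 = s k := by rw [ht]; simp [h0]
      refine ⟨h00, ?_⟩
      have hGd : HasFDerivAt (G k)
          (LinearMap.toContinuousLinearMap (JG k).mulVecLin) (t (k + 1) 0) := by
        rw [h0]; exact hG k hkN
      have hcomp : HasDerivWithinAt (fun β : ℝ => G k (t (k + 1) β))
          ((JG k) *ᵥ (-((B (k + 1))ᵀ *ᵥ g))) (Set.Ioi 0) 0 :=
        hGd.comp_hasDerivWithinAt 0 hd
      have heq : (JG k) *ᵥ (-((B (k + 1))ᵀ *ᵥ g)) = -((B k)ᵀ *ᵥ g) := by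
        rw [hJMC k hkN, hBrec k hkN, Matrix.transpose_mul, Matrix.mulVec_neg,
          Matrix.mulVec_mulVec]
      rw [ht]
      rw [heq] at hcomp
      simpa using (hcomp.const_add (s k)).sub_const (G k (s (k + 1)))
  intro k hk
  obtain ⟨h0, hd⟩ := key (N - k) k hk rfl
  have := hasDerivWithinAt_iff_tendsto_slope.mp hd
  have hset : Set.Ioi (0:ℝ) \ {0} = Set.Ioi 0 := by
    apply Set.diff_singleton_eq_self; simp
  rw [hset] at this
  refine this.congr fun β => ?_
  simp [slope, h0, vsub_eq_sub]
end

section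
/- Let F : R^n → R^m be differentiable at s with Jacobian J, and for ε ∼ N(0, σ²I_n) define the scaled quantity (1/σ²)·E[εᵀ·(first-order part of F(s+ε) − F(s) pulled back by a linear map ω)]. If the remainder satisfies F(s+ε) − F(s) = J·ε + R(ε) with ‖R(ε)‖ ≤ C‖ε‖² for ‖ε‖ ≤ 1, then |(1/σ²)·E[εᵀ·ω·R(ε)]| → 0 as σ → 0. -/
/-!
Split `E[εᵀ ω R(ε)]` over the closed unit ball and its complement. On the ball the integrand is
`O(‖ε‖³)`, and `E‖ε‖³ = σ³ E‖z‖³` for a standard Gaussian `z`, so this part is `O(σ³)`. Off the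
ball nothing is known about `R`, but the integrand may be assumed integrable for some
`N(0, σ₀² I)` (otherwise every integral is `0` by convention); there the density of `N(0, σ² I)`
is at most `(σ₀/σ)ⁿ exp(-(1/(2σ²) - 1/(2σ₀²)))` times that of `N(0, σ₀² I)`, and this factor is
`o(σ²)` as `σ → 0`.
-/

open MeasureTheory ProbabilityTheory Matrix Filter
open scoped NNReal ENNReal Topology
open WithLp (toLp)

namespace MeasureTheory

section

variable {E : Type*} [MeasurableSpace E]

theorem lintegral_fin_nat_prod_eq_prod {n : ℕ} {μ : Fin n → Measure E} [∀ i, SigmaFinite (μ i)]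
    {f : Fin n → E → ℝ≥0∞} (hf : ∀ i, Measurable (f i)) :
    ∫⁻ x : Fin n → E, ∏ i, f i (x i) ∂(Measure.pi μ) = ∏ i, ∫⁻ x, f i x ∂(μ i) := by
  induction n with
  | zero => simp
  | succ n ih =>
      calc
        _ = ∫⁻ x : E × (Fin n → E), f 0 x.1 * ∏ i : Fin n, f i.succ (x.2 i)
            ∂((μ 0).prod (Measure.pi fun i ↦ μ i.succ)) := by
          rw [← ((measurePreserving_piFinSuccAbove μ 0).symm).lintegral_comp_emb
            (MeasurableEquiv.measurableEmbedding _)]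
          simp_rw [MeasurableEquiv.piFinSuccAbove_symm_apply, Fin.insertNthEquiv,
            Fin.prod_univ_succ, Fin.insertNth_zero, Equiv.coe_fn_mk, Fin.cons_succ,
            Fin.zero_succAbove, cast_eq, Fin.cons_zero]
        _ = (∫⁻ x, f 0 x ∂μ 0) * ∏ i : Fin n, ∫⁻ x, f i.succ x ∂(μ i.succ) := by
          rw [← ih fun i ↦ hf i.succ, ← lintegral_prod_mul (hf 0).aemeasurable
            (Finset.measurable_prod _ fun i _ ↦
              (hf i.succ).comp (measurable_pi_apply i)).aemeasurable]
        _ = ∏ i, ∫⁻ x, f i x ∂(μ i) := by rw [Fin.prod_univ_succ]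

variable {ι : Type*} [Fintype ι]

theorem lintegral_fintype_prod_eq_prod {μ : ι → Measure E} [∀ i, SigmaFinite (μ i)]
    {f : ι → E → ℝ≥0∞} (hf : ∀ i, Measurable (f i)) :
    ∫⁻ x : ι → E, ∏ i, f i (x i) ∂(Measure.pi μ) = ∏ i, ∫⁻ x, f i x ∂(μ i) := by
  let e := (Fintype.equivFin ι).symm
  rw [← (measurePreserving_piCongrLeft μ e).lintegral_comp_emb
    (MeasurableEquiv.measurableEmbedding _)]
  simp_rw [← e.prod_comp, MeasurableEquiv.coe_piCongrLeft, Equiv.piCongrLeft_apply_apply]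
  exact lintegral_fin_nat_prod_eq_prod fun i ↦ hf (e i)

theorem Measure.pi_withDensity {μ : ι → Measure E} [∀ i, SigmaFinite (μ i)]
    {f : ι → E → ℝ≥0∞} (hf : ∀ i, Measurable (f i))
    [∀ i, SigmaFinite ((μ i).withDensity (f i))] :
    Measure.pi (fun i ↦ (μ i).withDensity (f i)) =
      (Measure.pi μ).withDensity fun x ↦ ∏ i, f i (x i) := by
  refine Measure.pi_eq fun s hs ↦ ?_
  rw [withDensity_apply _ (.univ_pi hs), Measure.restrict_pi_pi (μ := μ) s,
    lintegral_fintype_prod_eq_prod hf]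
  simp_rw [withDensity_apply _ (hs _)]

end

end MeasureTheory

namespace ProbabilityTheory

noncomputable def isotropicGaussian (ι : Type*) [Fintype ι] (σ : ℝ≥0) : Measure (ι → ℝ) :=
  Measure.pi fun _ ↦ gaussianReal 0 (σ ^ 2)

variable {ι : Type*} [Fintype ι]

lemma isotropicGaussian_eq_map_smul (σ : ℝ≥0) :
    isotropicGaussian ι σ = (isotropicGaussian ι 1).map ((σ : ℝ) • ·) := by
  have h : (gaussianReal 0 (1 ^ 2)).map ((σ : ℝ) * ·) = gaussianReal 0 (σ ^ 2) := by
    rw [gaussianReal_map_const_mul]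
    congr 1
    · ring
    · ext; simp
  unfold isotropicGaussian
  rw [← h, ← Measure.pi_map_pi fun _ ↦ (measurable_const_mul _).aemeasurable]
  rfl

lemma integrable_norm_toLp_pow_isotropicGaussian_one (p : ℕ) :
    Integrable (fun x ↦ ‖toLp 2 x‖ ^ p) (isotropicGaussian ι 1) := by
  have h : (isotropicGaussian ι 1).map (toLp 2) = stdGaussian (EuclideanSpace ℝ ι) := by
    rw [← map_pi_eq_stdGaussian, isotropicGaussian, one_pow]
  have hp := (IsGaussian.memLp_id (stdGaussian (EuclideanSpace ℝ ι)) p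
    (ENNReal.natCast_ne_top p)).integrable_norm_pow'
  rw [← h, integrable_map_measure (by fun_prop) (by fun_prop)] at hp
  exact hp

lemma integrable_norm_toLp_pow_isotropicGaussian (σ : ℝ≥0) (p : ℕ) :
    Integrable (fun x ↦ ‖toLp 2 x‖ ^ p) (isotropicGaussian ι σ) := by
  rw [isotropicGaussian_eq_map_smul, integrable_map_measure (by fun_prop) (by fun_prop)]
  simpa [Function.comp_def, WithLp.toLp_smul, norm_smul, mul_pow] using
    (integrable_norm_toLp_pow_isotropicGaussian_one p).const_mul ((σ : ℝ) ^ p)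

lemma integral_norm_toLp_pow_isotropicGaussian (σ : ℝ≥0) (p : ℕ) :
    ∫ x, ‖toLp 2 x‖ ^ p ∂isotropicGaussian ι σ =
      σ ^ p * ∫ x, ‖toLp 2 x‖ ^ p ∂isotropicGaussian ι 1 := by
  rw [isotropicGaussian_eq_map_smul σ, integral_map (by fun_prop) (by fun_prop),
    ← integral_const_mul]
  simp [WithLp.toLp_smul, norm_smul, mul_pow]

lemma isotropicGaussian_eq_withDensity {σ : ℝ≥0} (hσ : σ ≠ 0) :
    isotropicGaussian ι σ = volume.withDensity fun x ↦ ∏ i, gaussianPDF 0 (σ ^ 2) (x i) := by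
  have hv : σ ^ 2 ≠ 0 := pow_ne_zero 2 hσ
  have : SigmaFinite (volume.withDensity (gaussianPDF 0 (σ ^ 2))) := by
    rw [← gaussianReal_of_var_ne_zero 0 hv]; infer_instance
  rw [isotropicGaussian, funext fun _ ↦ gaussianReal_of_var_ne_zero 0 hv,
    Measure.pi_withDensity fun _ ↦ measurable_gaussianPDF 0 _, volume_pi]

lemma gaussianPDFReal_zero_eq_mul {σ σ₀ : ℝ≥0} (hσ : σ ≠ 0) (hσ₀ : σ₀ ≠ 0) (t : ℝ) :
    gaussianPDFReal 0 (σ ^ 2) t =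
      σ₀ / σ * Real.exp (-((2 * σ ^ 2 : ℝ)⁻¹ - (2 * σ₀ ^ 2 : ℝ)⁻¹) * t ^ 2) *
        gaussianPDFReal 0 (σ₀ ^ 2) t := by
  have hsqrt (τ : ℝ≥0) : √(2 * Real.pi * ((τ ^ 2 : ℝ≥0) : ℝ)) = √(2 * Real.pi) * τ := by
    rw [NNReal.coe_pow, Real.sqrt_mul (by positivity), Real.sqrt_sq τ.coe_nonneg]
  have hexp : Real.exp (-t ^ 2 / (2 * ((σ ^ 2 : ℝ≥0) : ℝ))) =
      Real.exp (-((2 * σ ^ 2 : ℝ)⁻¹ - (2 * σ₀ ^ 2 : ℝ)⁻¹) * t ^ 2) *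
        Real.exp (-t ^ 2 / (2 * ((σ₀ ^ 2 : ℝ≥0) : ℝ))) := by
    rw [← Real.exp_add]
    congr 1
    push_cast
    field_simp
    ring
  simp only [gaussianPDFReal, sub_zero, hsqrt, hexp]
  field_simp

noncomputable def gaussianTailRatio (d : ℕ) (σ₀ σ : ℝ) : ℝ :=
  (σ₀ / σ) ^ d * Real.exp (-((2 * σ ^ 2)⁻¹ - (2 * σ₀ ^ 2)⁻¹))

lemma gaussianTailRatio_nonneg (d : ℕ) {σ₀ σ : ℝ} (hσ₀ : 0 ≤ σ₀) (hσ : 0 ≤ σ) :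
    0 ≤ gaussianTailRatio d σ₀ σ := by
  unfold gaussianTailRatio; positivity

lemma prod_gaussianPDF_le {σ σ₀ : ℝ≥0} (hσ : σ ≠ 0) (hσσ₀ : σ ≤ σ₀) {x : ι → ℝ}
    (hx : 1 ≤ ‖toLp 2 x‖) :
    ∏ i, gaussianPDF 0 (σ ^ 2) (x i) ≤
      ENNReal.ofReal (gaussianTailRatio (Fintype.card ι) σ₀ σ) *
        ∏ i, gaussianPDF 0 (σ₀ ^ 2) (x i) := by
  have hσ₀ : σ₀ ≠ 0 := (lt_of_lt_of_le (pos_iff_ne_zero.2 hσ) hσσ₀).ne'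
  set κ : ℝ := (2 * σ ^ 2 : ℝ)⁻¹ - (2 * σ₀ ^ 2 : ℝ)⁻¹
  have hκ : 0 ≤ κ := sub_nonneg.2 <| inv_anti₀ (by positivity) (by gcongr)
  have hS : 1 ≤ ∑ i, x i ^ 2 := by
    simpa [← EuclideanSpace.real_norm_sq_eq] using one_le_pow₀ hx (n := 2)
  have hprod : ∏ i, gaussianPDFReal 0 (σ ^ 2) (x i) =
      (σ₀ / σ : ℝ) ^ Fintype.card ι * Real.exp (-κ * ∑ i, x i ^ 2) *
        ∏ i, gaussianPDFReal 0 (σ₀ ^ 2) (x i) := by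
    simp_rw [gaussianPDFReal_zero_eq_mul hσ hσ₀, Finset.prod_mul_distrib, Finset.prod_const,
      Finset.card_univ, ← Real.exp_sum, Finset.mul_sum]
    rfl
  have hexp : Real.exp (-κ * ∑ i, x i ^ 2) ≤ Real.exp (-κ) :=
    Real.exp_le_exp.2 (by nlinarith)
  simp_rw [gaussianPDF, ← ENNReal.ofReal_prod_of_nonneg fun i _ ↦ gaussianPDFReal_nonneg _ _ _,
    ← ENNReal.ofReal_mul (gaussianTailRatio_nonneg _ σ₀.coe_nonneg σ.coe_nonneg)]
  refine ENNReal.ofReal_le_ofReal ?_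
  rw [hprod, gaussianTailRatio]
  gcongr
  exact Finset.prod_nonneg fun i _ ↦ gaussianPDFReal_nonneg _ _ _

lemma isotropicGaussian_restrict_le {σ σ₀ : ℝ≥0} (hσ : σ ≠ 0) (hσσ₀ : σ ≤ σ₀)
    {s : Set (ι → ℝ)} (hs : MeasurableSet s) (hs₁ : ∀ x ∈ s, 1 ≤ ‖toLp 2 x‖) :
    (isotropicGaussian ι σ).restrict s ≤
      ENNReal.ofReal (gaussianTailRatio (Fintype.card ι) σ₀ σ) •
        (isotropicGaussian ι σ₀).restrict s := by
  have hσ₀ : σ₀ ≠ 0 := (lt_of_lt_of_le (pos_iff_ne_zero.2 hσ) hσσ₀).ne'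
  rw [isotropicGaussian_eq_withDensity hσ, isotropicGaussian_eq_withDensity hσ₀,
    restrict_withDensity hs, restrict_withDensity hs, ← withDensity_smul _ (by fun_prop)]
  exact withDensity_mono <| (ae_restrict_iff' hs).2 <| ae_of_all _ fun x hx ↦
    prod_gaussianPDF_le hσ hσσ₀ (hs₁ x hx)

lemma setIntegral_abs_isotropicGaussian_le {σ σ₀ : ℝ≥0} (hσ : σ ≠ 0) (hσσ₀ : σ ≤ σ₀)
    {s : Set (ι → ℝ)} (hs : MeasurableSet s) (hs₁ : ∀ x ∈ s, 1 ≤ ‖toLp 2 x‖)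
    {g : (ι → ℝ) → ℝ} (hg : Integrable g (isotropicGaussian ι σ₀)) :
    ∫ x in s, |g x| ∂isotropicGaussian ι σ ≤
      gaussianTailRatio (Fintype.card ι) σ₀ σ * ∫ x, |g x| ∂isotropicGaussian ι σ₀ := by
  have hr := gaussianTailRatio_nonneg (Fintype.card ι) σ₀.coe_nonneg σ.coe_nonneg
  calc ∫ x in s, |g x| ∂isotropicGaussian ι σ
      ≤ ∫ x, |g x| ∂(ENNReal.ofReal (gaussianTailRatio (Fintype.card ι) σ₀ σ) •
          (isotropicGaussian ι σ₀).restrict s) :=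
        integral_mono_measure (isotropicGaussian_restrict_le hσ hσσ₀ hs hs₁)
          (ae_of_all _ fun _ ↦ abs_nonneg _) (hg.abs.restrict.smul_measure ENNReal.ofReal_ne_top)
    _ ≤ _ := by
        rw [integral_smul_measure, ENNReal.toReal_ofReal hr, smul_eq_mul]
        exact mul_le_mul_of_nonneg_left
          (setIntegral_le_integral hg.abs (ae_of_all _ fun _ ↦ abs_nonneg _)) hr

lemma setIntegral_abs_le_of_abs_le_norm_pow {σ : ℝ≥0} {p : ℕ} {c : ℝ} (hc : 0 ≤ c)
    {g : (ι → ℝ) → ℝ} (hg : ∀ x, ‖toLp 2 x‖ ≤ 1 → |g x| ≤ c * ‖toLp 2 x‖ ^ p)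
    (hint : Integrable g (isotropicGaussian ι σ)) :
    ∫ x in {x | ‖toLp 2 x‖ ≤ 1}, |g x| ∂isotropicGaussian ι σ ≤
      c * σ ^ p * ∫ x, ‖toLp 2 x‖ ^ p ∂isotropicGaussian ι 1 := by
  have hpow := (integrable_norm_toLp_pow_isotropicGaussian (ι := ι) σ p).const_mul c
  calc ∫ x in {x | ‖toLp 2 x‖ ≤ 1}, |g x| ∂isotropicGaussian ι σ
      ≤ ∫ x in {x | ‖toLp 2 x‖ ≤ 1}, c * ‖toLp 2 x‖ ^ p ∂isotropicGaussian ι σ :=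
        setIntegral_mono_on hint.abs.integrableOn hpow.integrableOn
          (measurableSet_le (by fun_prop) measurable_const) hg
    _ ≤ ∫ x, c * ‖toLp 2 x‖ ^ p ∂isotropicGaussian ι σ :=
        setIntegral_le_integral hpow (ae_of_all _ fun _ ↦ by positivity)
    _ = _ := by rw [integral_const_mul, integral_norm_toLp_pow_isotropicGaussian, mul_assoc]

theorem abs_integral_isotropicGaussian_le {p : ℕ} {c : ℝ} (hc : 0 ≤ c) {g : (ι → ℝ) → ℝ}
    (hg : ∀ x, ‖toLp 2 x‖ ≤ 1 → |g x| ≤ c * ‖toLp 2 x‖ ^ p)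
    {σ σ₀ : ℝ≥0} (hσ : σ ≠ 0) (hσσ₀ : σ ≤ σ₀) (hg₀ : Integrable g (isotropicGaussian ι σ₀)) :
    |∫ x, g x ∂isotropicGaussian ι σ| ≤
      c * σ ^ p * ∫ x, ‖toLp 2 x‖ ^ p ∂isotropicGaussian ι 1 +
        gaussianTailRatio (Fintype.card ι) σ₀ σ * ∫ x, |g x| ∂isotropicGaussian ι σ₀ := by
  have hrhs : 0 ≤ c * σ ^ p * ∫ x, ‖toLp 2 x‖ ^ p ∂isotropicGaussian ι 1 +
      gaussianTailRatio (Fintype.card ι) σ₀ σ * ∫ x, |g x| ∂isotropicGaussian ι σ₀ :=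
    add_nonneg (mul_nonneg (by positivity) (integral_nonneg fun _ ↦ by positivity))
      (mul_nonneg (gaussianTailRatio_nonneg _ σ₀.coe_nonneg σ.coe_nonneg)
        (integral_nonneg fun _ ↦ abs_nonneg _))
  by_cases hint : Integrable g (isotropicGaussian ι σ)
  swap
  · rwa [integral_undef hint, abs_zero]
  set s : Set (ι → ℝ) := {x | ‖toLp 2 x‖ ≤ 1}
  have hs : MeasurableSet s := measurableSet_le (by fun_prop) measurable_const
  calc |∫ x, g x ∂isotropicGaussian ι σ|
      ≤ ∫ x, |g x| ∂isotropicGaussian ι σ := abs_integral_le_integral_abs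
    _ = ∫ x in s, |g x| ∂isotropicGaussian ι σ + ∫ x in sᶜ, |g x| ∂isotropicGaussian ι σ :=
        (integral_add_compl hs hint.abs).symm
    _ ≤ _ := add_le_add (setIntegral_abs_le_of_abs_le_norm_pow hc hg hint)
        (setIntegral_abs_isotropicGaussian_le hσ hσσ₀ hs.compl
          (fun x (hx : ¬‖_‖ ≤ 1) ↦ (not_le.1 hx).le) hg₀)

lemma tendsto_gaussianTailRatio_div_sq (d : ℕ) (σ₀ : ℝ) :
    Tendsto (fun σ ↦ gaussianTailRatio d σ₀ σ / σ ^ 2) (𝓝[>] 0) (𝓝 0) := by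
  have hdecay : Tendsto (fun u : ℝ ↦ u ^ (d + 2) * Real.exp (-(1 / 2) * u ^ 2)) atTop (𝓝 0) := by
    refine ((tendsto_rpow_abs_mul_exp_neg_mul_sq_cocompact one_half_pos (d + 2 : ℕ)).mono_left
      atTop_le_cocompact).congr' ?_
    filter_upwards [eventually_ge_atTop 0] with u hu
    rw [abs_of_nonneg hu, Real.rpow_natCast]
  have h := (hdecay.comp tendsto_inv_nhdsGT_zero).const_mul
    (σ₀ ^ d * Real.exp (2 * σ₀ ^ 2)⁻¹)
  rw [mul_zero] at h
  refine h.congr' ?_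
  filter_upwards [self_mem_nhdsWithin] with σ (hσ : 0 < σ)
  have hexp : Real.exp (-((2 * σ ^ 2)⁻¹ - (2 * σ₀ ^ 2)⁻¹)) =
      Real.exp (2 * σ₀ ^ 2)⁻¹ * Real.exp (-(1 / 2) * σ⁻¹ ^ 2) := by
    rw [← Real.exp_add]; congr 1; field_simp; ring
  have := hσ.ne'
  simp only [Function.comp_apply, gaussianTailRatio, hexp, div_pow, inv_pow, pow_add]
  field_simp

theorem tendsto_inv_sq_mul_integral_isotropicGaussian {p : ℕ} (hp : 2 < p) {c : ℝ} (hc : 0 ≤ c)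
    {g : (ι → ℝ) → ℝ} (hg : ∀ x, ‖toLp 2 x‖ ≤ 1 → |g x| ≤ c * ‖toLp 2 x‖ ^ p) :
    Tendsto (fun σ : ℝ≥0 ↦ |((σ : ℝ) ^ 2)⁻¹ * ∫ x, g x ∂isotropicGaussian ι σ|) (𝓝[>] 0) (𝓝 0) := by
  by_cases hint : ∃ σ₀ ≠ 0, Integrable g (isotropicGaussian ι σ₀)
  swap
  · push Not at hint
    refine tendsto_const_nhds.congr' ?_
    filter_upwards [self_mem_nhdsWithin] with σ (hσ : 0 < σ)
    rw [integral_undef (hint σ hσ.ne'), mul_zero, abs_zero]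
  obtain ⟨σ₀, hσ₀, hg₀⟩ := hint
  set M := ∫ x, ‖toLp 2 x‖ ^ p ∂isotropicGaussian ι 1
  set I₀ := ∫ x, |g x| ∂isotropicGaussian ι σ₀
  have hcoe : Tendsto ((↑) : ℝ≥0 → ℝ) (𝓝[>] 0) (𝓝[>] 0) := by
    have h := (NNReal.map_coe_nhdsGT 0).le
    rwa [NNReal.coe_zero] at h
  have hlim : Tendsto (fun σ : ℝ≥0 ↦ c * M * (σ : ℝ) ^ (p - 2) +
      I₀ * (gaussianTailRatio (Fintype.card ι) σ₀ σ / (σ : ℝ) ^ 2)) (𝓝[>] 0) (𝓝 0) := by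
    have hpow := ((continuous_pow (p - 2)).tendsto' 0 0 (zero_pow (by omega))).comp
      (tendsto_nhdsWithin_iff.1 hcoe).1
    simpa using (hpow.const_mul (c * M)).add
      (((tendsto_gaussianTailRatio_div_sq _ σ₀).comp hcoe).const_mul I₀)
  refine squeeze_zero' (Eventually.of_forall fun _ ↦ abs_nonneg _) ?_ hlim
  filter_upwards [self_mem_nhdsWithin, eventually_nhdsWithin_of_eventually_nhds
    (eventually_lt_nhds (pos_iff_ne_zero.2 hσ₀))] with σ (hσ : 0 < σ) hσσ₀
  have hσ' : (0 : ℝ) < σ := hσ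
  rw [abs_mul, abs_of_pos (by positivity), inv_mul_le_iff₀ (by positivity)]
  refine (abs_integral_isotropicGaussian_le hc hg hσ.ne' hσσ₀.le hg₀).trans_eq ?_
  have hpow : (σ : ℝ) ^ p = σ ^ 2 * σ ^ (p - 2) := by rw [← pow_add, Nat.add_sub_cancel' hp.le]
  rw [hpow]
  field_simp
  ring

end ProbabilityTheory

lemma Matrix.abs_dotProduct_mulVec_le {m n : Type*} [Fintype m] [Fintype n] [DecidableEq n]
    (A : Matrix m n ℝ) (x : m → ℝ) (y : n → ℝ) :
    |x ⬝ᵥ (A *ᵥ y)| ≤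
      ‖LinearMap.toContinuousLinearMap (Matrix.toLpLin 2 2 A)‖ * ‖toLp 2 x‖ *
        ‖toLp 2 y‖ := by
  have h : x ⬝ᵥ (A *ᵥ y) = inner ℝ (toLp 2 (A *ᵥ y)) (toLp 2 x) := by
    rw [EuclideanSpace.inner_toLp_toLp, star_trivial]
  have hA : toLp 2 (A *ᵥ y) =
      LinearMap.toContinuousLinearMap (Matrix.toLpLin 2 2 A) (toLp 2 y) := by
    simp
  rw [h]
  refine (abs_real_inner_le_norm _ _).trans ?_
  rw [hA, mul_right_comm]
  exact mul_le_mul_of_nonneg_right ((LinearMap.toContinuousLinearMap _).le_opNorm _)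
    (norm_nonneg _)

theorem ldrl_remainder_vanishes_general (n m : ℕ)
    (ω : Matrix (Fin n) (Fin m) ℝ)
    (R : (Fin n → ℝ) → (Fin m → ℝ)) (C : ℝ)
    (hC : ∀ ε : Fin n → ℝ, Real.sqrt (∑ i, ε i ^ 2) ≤ 1 →
        Real.sqrt (∑ i, (R ε) i ^ 2) ≤ C * ∑ i, ε i ^ 2)
    (μ : ℝ≥0 → Measure (Fin n → ℝ))
    (hμ : ∀ σ : ℝ≥0, μ σ = Measure.pi fun _ : Fin n => gaussianReal 0 (σ ^ 2)) :
    Tendsto (fun σ : ℝ≥0 => |(((σ : ℝ) ^ 2)⁻¹) * ∫ ε, ε ⬝ᵥ (ω *ᵥ R ε) ∂(μ σ)|)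
      (nhdsWithin 0 (Set.Ioi 0)) (nhds 0) := by
  obtain rfl : μ = isotropicGaussian (Fin n) := funext hμ
  have hnorm {k : ℕ} (x : Fin k → ℝ) : ‖toLp 2 x‖ = √(∑ i, x i ^ 2) := by
    simp [EuclideanSpace.norm_eq]
  set K := ‖LinearMap.toContinuousLinearMap (toLpLin 2 2 ω)‖
  refine tendsto_inv_sq_mul_integral_isotropicGaussian (p := 3) (by norm_num)
    (by positivity : 0 ≤ K * |C|) fun ε hε ↦ ?_
  have hRε : ‖toLp 2 (R ε)‖ ≤ |C| * ‖toLp 2 ε‖ ^ 2 := by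
    rw [hnorm, hnorm, Real.sq_sqrt (by positivity)]
    exact (hC ε (hnorm ε ▸ hε)).trans (by gcongr; exact le_abs_self C)
  calc |ε ⬝ᵥ (ω *ᵥ R ε)| ≤ K * ‖toLp 2 ε‖ * ‖toLp 2 (R ε)‖ :=
        abs_dotProduct_mulVec_le ω ε (R ε)
    _ ≤ K * ‖toLp 2 ε‖ * (|C| * ‖toLp 2 ε‖ ^ 2) := by gcongr
    _ = K * |C| * ‖toLp 2 ε‖ ^ 3 := by ring

/-- If `F(s+ε) − F(s) = J·ε + R(ε)` with a quadratic remainder bound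
`‖R(ε)‖ ≤ C‖ε‖²` (Euclidean norms) for `‖ε‖ ≤ 1`, then for `ε ~ N(0, σ² I_n)` the
scaled error term `(1/σ²)·E[εᵀ·ω·R(ε)]` vanishes as `σ → 0⁺`. -/
theorem ldrl_remainder_vanishes (n m : ℕ)
    (F : (Fin n → ℝ) → (Fin m → ℝ)) (s : Fin n → ℝ)
    (J : Matrix (Fin m) (Fin n) ℝ) (ω : Matrix (Fin n) (Fin m) ℝ)
    (R : (Fin n → ℝ) → (Fin m → ℝ)) (C : ℝ)
    (hR : ∀ ε : Fin n → ℝ, F (s + ε) - F s = J *ᵥ ε + R ε)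
    (hC : ∀ ε : Fin n → ℝ, Real.sqrt (∑ i, ε i ^ 2) ≤ 1 →
        Real.sqrt (∑ i, (R ε) i ^ 2) ≤ C * ∑ i, ε i ^ 2)
    (μ : ℝ≥0 → Measure (Fin n → ℝ))
    (hμ : ∀ σ : ℝ≥0, μ σ = Measure.pi fun _ : Fin n => gaussianReal 0 (σ ^ 2)) :
    Tendsto (fun σ : ℝ≥0 => |(((σ : ℝ) ^ 2)⁻¹) * ∫ ε, ε ⬝ᵥ (ω *ᵥ R ε) ∂(μ σ)|)
      (nhdsWithin 0 (Set.Ioi 0)) (nhds 0) :=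
  ldrl_remainder_vanishes_general n m ω R C hC μ hμ
end
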